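/- Let V ⊆ L²(X) be a closed subspace. Then V is (Γ, σ)-invariant if and only if there exists a measurable range function J : Γ̂ → {closed subspaces of L²(C)} such that V = {f ∈ L²(X) : Z_σ[f](α) ∈ J(α) for a.e. α ∈ Γ̂}. Moreover, identifying range functions equal almost everywhere, this correspondence between (Γ, σ)-invariant spaces and measurable range functions is bijective, and if V = S_σ^Γ(A) for a countable set A ⊆ L²(X) then J(α) = closure of span{Z_σ[φ](α) : φ ∈ A} for a.e. α. -/

import Mathlib

open MeasureTheory

/-- Measurable range function: the orthogonal projection `P_{J(ω)} a` (encoded as the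
nearest point to `a` in the closed subspace `J(ω)`) depends measurably on `ω`. -/
def IsMeasurableRangeFunction {Ω E : Type*} [MeasurableSpace Ω]
    [NormedAddCommGroup E] [InnerProductSpace ℂ E] (J : Ω → Submodule ℂ E) : Prop :=
  (∀ ω, IsClosed (J ω : Set E)) ∧
  ∀ a : E, ∃ p : Ω → E, StronglyMeasurable p ∧
    ∀ ω, p ω ∈ J ω ∧ ∀ v ∈ J ω, ‖a - p ω‖ ≤ ‖a - v‖

/-!
The Zak transform `Z` is unitary and turns the action of `γ` into multiplication of the fibres
by the character `χ γ`. Hence, if `h` is orthogonal to every translate of `φ`, all Fourier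
coefficients of `α ↦ ⟪Z φ α, Z h α⟫` vanish, so the fibres of `h` are a.e. orthogonal to those
of `φ`. For countable `A` this identifies `S_σ^Γ(A)` with the space of `f` whose fibres lie
a.e. in `J α = closure span {Z φ α | φ ∈ A}`; every invariant space is `S_σ^Γ(A)` for a
countable dense `A` inside it. Measurability of `J`: the projection of `a`
onto `J α` is the limit of near-minimisers of `‖a - v‖` chosen, measurably in `α`, among
countably many combinations of the `Z φ α`. Conversely, nearest points to a dense set of `a`
determine a closed subspace, which makes the range function unique up to null sets.
-/

open Filter Topology Set Submodule

section InnerProductSpace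

variable {H : Type*} [NormedAddCommGroup H] [InnerProductSpace ℂ H]

theorem Submodule.le_of_forall_nearest_mem {K L : Submodule ℂ H} (hL : IsClosed (L : Set H))
    {D : Set H} (hD : Dense D) (p : H → H) (hp : ∀ a ∈ D, ∀ v ∈ K, ‖a - p a‖ ≤ ‖a - v‖)
    (hpL : ∀ a ∈ D, p a ∈ L) : K ≤ L := by
  intro v hv
  rw [← SetLike.mem_coe, ← hL.closure_eq, Metric.mem_closure_iff]
  intro ε hε
  obtain ⟨a, haD, hva⟩ := Metric.mem_closure_iff.1 (hD v) (ε / 2) (half_pos hε)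
  refine ⟨p a, hpL a haD, ?_⟩
  rw [dist_eq_norm] at hva ⊢
  calc ‖v - p a‖ ≤ ‖v - a‖ + ‖a - p a‖ := norm_sub_le_norm_sub_add_norm_sub v a (p a)
    _ ≤ ‖v - a‖ + ‖a - v‖ := by gcongr; exact hp a haD v hv
    _ < ε := by rw [norm_sub_rev a v]; linarith

theorem Submodule.norm_sub_starProjection_le {K : Submodule ℂ H} [K.HasOrthogonalProjection]
    (a : H) {v : H} (hv : v ∈ K) : ‖a - K.starProjection a‖ ≤ ‖a - v‖ := by
  rw [starProjection_minimal]
  exact ciInf_le ⟨0, by rintro _ ⟨w, rfl⟩; positivity⟩ (⟨v, hv⟩ : K)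

theorem Submodule.tendsto_starProjection_of_tendsto_norm_sub {K : Submodule ℂ H}
    [K.HasOrthogonalProjection] {ι : Type*} {l : Filter ι} {a : H} {x : ι → H}
    (hxK : ∀ i, x i ∈ K) (hx : Tendsto (fun i => ‖a - x i‖) l (𝓝 ‖a - K.starProjection a‖)) :
    Tendsto x l (𝓝 (K.starProjection a)) := by
  set P := K.starProjection a
  have pythagoras : ∀ i, ‖a - x i‖ ^ 2 = ‖a - P‖ ^ 2 + ‖x i - P‖ ^ 2 := fun i => by
    have horth : inner ℂ (a - P) (P - x i) = 0 :=
      (K.mem_orthogonal' _).1 (K.sub_starProjection_mem_orthogonal a) _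
        (K.sub_mem (K.starProjection_apply_mem a) (hxK i))
    have := norm_add_sq_eq_norm_sq_add_norm_sq_of_inner_eq_zero _ _ horth
    rw [sub_add_sub_cancel, norm_sub_rev P] at this
    simpa only [sq] using this
  have hsq : Tendsto (fun i => ‖x i - P‖ ^ 2) l (𝓝 0) := by
    have := (hx.pow 2).sub_const (‖a - P‖ ^ 2)
    simpa only [sub_self, pythagoras, add_sub_cancel_left] using this
  rw [tendsto_iff_norm_sub_tendsto_zero]
  simpa using hsq.sqrt

theorem Submodule.eq_zero_of_mem_closure_span_of_inner_eq_zero {S : Set H} {v : H}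
    (hv : v ∈ (span ℂ S).topologicalClosure)
    (horth : ∀ u ∈ S, inner ℂ u v = 0) : v = 0 := by
  have hspan : span ℂ S ≤ (ℂ ∙ v)ᗮ := isOrtho_span.2 fun u hu w hw => by
    rw [mem_singleton_iff.1 hw]; exact horth u hu
  have := topologicalClosure_minimal _ hspan (isClosed_orthogonal _) hv
  exact inner_self_eq_zero.1 (mem_orthogonal_singleton_iff_inner_right.1 this)

variable {ι : Type*}

def listCombination (c : ℕ → ℂ) (v : ι → H) (l : List (ℕ × ι)) : H :=
  (l.map fun p => c p.1 • v p.2).sum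

theorem listCombination_mem_span (c : ℕ → ℂ) (v : ι → H) (l : List (ℕ × ι)) :
    listCombination c v l ∈ span ℂ (range v) :=
  list_sum_mem <| by
    simp only [List.mem_map]
    rintro _ ⟨p, -, rfl⟩
    exact smul_mem _ _ (subset_span ⟨p.2, rfl⟩)

theorem span_subset_closure_range_listCombination {c : ℕ → ℂ} (hc : DenseRange c) (v : ι → H) :
    (span ℂ (range v) : Set H) ⊆ closure (range (listCombination c v)) := by
  set M := AddSubmonoid.closure (range fun p : ℕ × ι => c p.1 • v p.2)
  have hM : (M : Set H) ⊆ range (listCombination c v) := fun x hx => by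
    obtain ⟨L, hL, rfl⟩ := AddSubmonoid.exists_list_of_mem_closure hx
    obtain ⟨l, rfl⟩ : L ∈ range (List.map fun p : ℕ × ι => c p.1 • v p.2) := by
      rwa [range_list_map]
    exact ⟨l, rfl⟩
  have hsmul : ∀ (b : ℂ) j, b • v j ∈ M.topologicalClosure := fun b j =>
    map_mem_closure (f := fun b : ℂ => b • v j) (continuous_id.smul continuous_const) (hc b)
      fun _ ⟨i, hi⟩ => AddSubmonoid.subset_closure ⟨(i, j), by rw [← hi]⟩
  intro x hx
  obtain ⟨b, rfl⟩ := Finsupp.mem_span_range_iff_exists_finsupp.1 hx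
  exact closure_mono hM (sum_mem fun j _ => hsmul (b j) j)

end InnerProductSpace

theorem conj_eq_apply_neg {Γ : Type*} [AddGroup Γ] {f : Γ → ℂ}
    (hadd : ∀ a b, f (a + b) = f a * f b) (hnorm : ∀ a, ‖f a‖ = 1) (a : Γ) :
    starRingEnd ℂ (f a) = f (-a) := by
  have hf0 : f 0 = 1 := by
    have hne : f 0 ≠ 0 := fun h => by simpa [h] using hnorm 0
    simpa [hne] using (hadd 0 0).symm
  rw [← RCLike.inv_eq_conj (hnorm a)]
  exact inv_eq_of_mul_eq_one_right (by rw [← hadd, add_neg_cancel, hf0])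

section MeasurableSelection

variable {Ω H : Type*} [MeasurableSpace Ω] [NormedAddCommGroup H] [InnerProductSpace ℂ H]
  [CompleteSpace H] [SecondCountableTopology H]

theorem IsMeasurableRangeFunction.of_dense_seq {J : Ω → Submodule ℂ H}
    (hJ : ∀ ω, IsClosed (J ω : Set H)) (u : ℕ → Ω → H) (hu : ∀ n, StronglyMeasurable (u n))
    (huJ : ∀ n ω, u n ω ∈ J ω) (hdense : ∀ ω, (J ω : Set H) ⊆ closure (range fun n => u n ω)) :
    IsMeasurableRangeFunction J := by
  classical
  borelize H
  have : ∀ ω, (J ω).HasOrthogonalProjection := fun ω =>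
    have := (hJ ω).completeSpace_coe
    inferInstance
  refine ⟨hJ, fun a => ⟨fun ω => (J ω).starProjection a, ?_, fun ω =>
    ⟨(J ω).starProjection_apply_mem a, fun v hv => norm_sub_starProjection_le a hv⟩⟩⟩
  -- `d ω = dist a (J ω)`, computed along the dense sequence so that it is measurable in `ω`.
  set d : Ω → ℝ := fun ω => ⨅ n, ‖a - u n ω‖
  have hd_le : ∀ ω n, d ω ≤ ‖a - u n ω‖ := fun ω n =>
    ciInf_le ⟨0, by rintro _ ⟨k, rfl⟩; positivity⟩ n
  have hd_le_proj : ∀ ω, d ω ≤ ‖a - (J ω).starProjection a‖ := fun ω =>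
    closure_minimal (s := range fun n => u n ω) (by rintro _ ⟨n, rfl⟩; exact hd_le ω n)
      (isClosed_le continuous_const (continuous_const.sub continuous_id).norm)
      (hdense ω ((J ω).starProjection_apply_mem a))
  have hd_meas : Measurable d :=
    .iInf fun n => (stronglyMeasurable_const.sub (hu n)).norm.measurable
  have hex : ∀ (k : ℕ) ω, ∃ n, ‖a - u n ω‖ < d ω + 1 / (k + 1) := fun k ω =>
    exists_lt_of_ciInf_lt (lt_add_of_pos_right _ Nat.one_div_pos_of_nat)
  -- The first `u n ω` within `1 / (k + 1)` of `d ω` tends to the projection as `k → ∞`.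
  refine stronglyMeasurable_of_tendsto (f := fun k ω => u (Nat.find (hex k ω)) ω) atTop
    (fun k => (Measurable.find (fun n => (hu n).measurable) (fun n => measurableSet_lt
      (stronglyMeasurable_const.sub (hu n)).norm.measurable (hd_meas.add_const _))
      (hex k)).stronglyMeasurable) (tendsto_pi_nhds.2 fun ω => ?_)
  refine tendsto_starProjection_of_tendsto_norm_sub (fun k => huJ _ ω) ?_
  have hupper : Tendsto (fun k : ℕ => ‖a - (J ω).starProjection a‖ + 1 / (k + 1)) atTop
      (𝓝 ‖a - (J ω).starProjection a‖) := by
    simpa using (tendsto_const_nhds (x := ‖a - (J ω).starProjection a‖)).add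
      tendsto_one_div_add_atTop_nhds_zero_nat
  refine tendsto_of_tendsto_of_tendsto_of_le_of_le tendsto_const_nhds hupper
    (fun k => norm_sub_starProjection_le a (huJ _ ω)) fun k => ?_
  have := Nat.find_spec (hex k ω)
  dsimp only
  linarith [hd_le_proj ω]

theorem IsMeasurableRangeFunction.closure_span {ι : Type*} [Countable ι] (g : ι → Ω → H)
    (hg : ∀ i, StronglyMeasurable (g i)) :
    IsMeasurableRangeFunction fun ω => (span ℂ (range fun i => g i ω)).topologicalClosure := by
  obtain ⟨e, he⟩ := exists_surjective_nat (List (ℕ × ι))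
  set c := TopologicalSpace.denseSeq ℂ
  refine .of_dense_seq (fun ω => isClosed_topologicalClosure _)
    (fun n ω => listCombination c (fun i => g i ω) (e n)) (fun n => ?_)
    (fun n ω => le_topologicalClosure _ (listCombination_mem_span _ _ _)) fun ω => ?_
  · simpa [listCombination, Function.comp_def] using
      List.stronglyMeasurable_fun_sum ((e n).map fun p ω => c p.1 • g p.2 ω)
        (by simp only [List.mem_map]; rintro _ ⟨p, -, rfl⟩; exact (hg p.2).const_smul (c p.1))
  · rw [topologicalClosure_coe, ← Function.comp_def (listCombination c fun i => g i ω) e,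
      he.range_comp]
    exact closure_minimal (span_subset_closure_range_listCombination
      (TopologicalSpace.denseRange_denseSeq ℂ) _) isClosed_closure

end MeasurableSelection

section Uniqueness

variable {Ω H : Type*} [MeasurableSpace Ω] {m : Measure Ω} [NormedAddCommGroup H]
  [InnerProductSpace ℂ H]

theorem IsMeasurableRangeFunction.ae_le [IsFiniteMeasure m] [SecondCountableTopology H]
    {p : ENNReal} {J₁ J₂ : Ω → Submodule ℂ H} (h₁ : IsMeasurableRangeFunction J₁)
    (hJ₂ : ∀ ω, IsClosed (J₂ ω : Set H))
    (h : ∀ F : Lp H p m, (∀ᵐ ω ∂m, F ω ∈ J₁ ω) → ∀ᵐ ω ∂m, F ω ∈ J₂ ω) :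
    ∀ᵐ ω ∂m, J₁ ω ≤ J₂ ω := by
  obtain ⟨D, hDc, hD⟩ := TopologicalSpace.exists_countable_dense H
  choose P hPmeas hP using h₁.2
  have hPJ₂ : ∀ a, ∀ᵐ ω ∂m, P a ω ∈ J₂ ω := fun a => by
    have hbound : ∀ ω, ‖P a ω‖ ≤ 2 * ‖a‖ := fun ω => by
      have := (hP a ω).2 0 (zero_mem _)
      rw [sub_zero] at this
      linarith [norm_le_norm_sub_add (P a ω) a, norm_sub_rev (P a ω) a]
    have hmem : MemLp (P a) p m :=
      .of_bound (hPmeas a).aestronglyMeasurable _ (ae_of_all _ hbound)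
    have hJ₁ : ∀ᵐ ω ∂m, hmem.toLp _ ω ∈ J₁ ω := by
      filter_upwards [hmem.coeFn_toLp] with ω hω
      exact hω ▸ (hP a ω).1
    filter_upwards [h _ hJ₁, hmem.coeFn_toLp] with ω hω hω'
    rwa [hω'] at hω
  filter_upwards [(ae_ball_iff hDc).2 fun a _ => hPJ₂ a] with ω hω
  exact le_of_forall_nearest_mem (hJ₂ ω) hD (P · ω) (fun a _ => (hP a ω).2) hω

end Uniqueness

namespace MeasureTheory.Lp

variable {Ω H : Type*} [MeasurableSpace Ω] {m : Measure Ω} [NormedAddCommGroup H]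
  [NormedSpace ℂ H] {p : ENNReal}

def aeMemSubmodule (J : Ω → Submodule ℂ H) : Submodule ℂ (Lp H p m) where
  carrier := {F | ∀ᵐ ω ∂m, F ω ∈ J ω}
  add_mem' {F G} hF hG := by
    filter_upwards [hF, hG, Lp.coeFn_add F G] with ω hF hG hFG
    exact hFG ▸ add_mem hF hG
  zero_mem' := by
    filter_upwards [Lp.coeFn_zero H p m] with ω h0
    exact h0 ▸ zero_mem _
  smul_mem' c F hF := by
    filter_upwards [hF, Lp.coeFn_smul c F] with ω hF hcF
    exact hcF ▸ smul_mem _ c hF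

theorem isClosed_aeMemSubmodule [Fact (1 ≤ p)] {J : Ω → Submodule ℂ H}
    (hJ : ∀ ω, IsClosed (J ω : Set H)) :
    IsClosed ((aeMemSubmodule J : Submodule ℂ (Lp H p m)) : Set (Lp H p m)) := by
  refine isSeqClosed_iff_isClosed.1 fun F F₀ hF hF₀ => ?_
  obtain ⟨ns, -, hns⟩ := (tendstoInMeasure_of_tendsto_Lp hF₀).exists_seq_tendsto_ae
  filter_upwards [ae_all_iff.2 fun k => hF (ns k), hns] with ω hFω hlim
  exact (hJ ω).mem_of_tendsto hlim (.of_forall hFω)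

end MeasureTheory.Lp

theorem secondCountableTopology_of_Lp {Ω H : Type*} [MeasurableSpace Ω] {m : Measure Ω}
    [IsProbabilityMeasure m] [NormedAddCommGroup H] {p : ENNReal} [Fact (1 ≤ p)]
    [SecondCountableTopology (Lp H p m)] : SecondCountableTopology H := by
  have hnorm (c : H) : ‖Lp.const p m c‖ = ‖c‖ := by
    simp [Lp.norm_const p m c (zero_lt_one.trans_le Fact.out).ne']
  exact (AddMonoidHomClass.isometry_of_norm (Lp.const p m) hnorm).isEmbedding.secondCountableTopology

section Fiberization

variable {Γ Ω E H : Type*} [MeasurableSpace Ω] {m : Measure Ω}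
  [NormedAddCommGroup E] [InnerProductSpace ℂ E] [NormedAddCommGroup H] [InnerProductSpace ℂ H]
  {χ : Γ → Ω → ℂ} {T : Γ → E ≃ₗᵢ[ℂ] E} {Z : E ≃ₗᵢ[ℂ] Lp H 2 m}

variable (T) in
/-- `S_σ^Γ(A)`. -/
def orbitSpan (A : Set E) : Submodule ℂ E :=
  (span ℂ {g | ∃ φ ∈ A, ∃ γ, g = T γ φ}).topologicalClosure

variable (Z) in
def fiberSpan (A : Set E) (ω : Ω) : Submodule ℂ H :=
  (span ℂ {v | ∃ φ ∈ A, v = Z φ ω}).topologicalClosure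

variable (Z) in
noncomputable def fiberSubmodule (J : Ω → Submodule ℂ H) : Submodule ℂ E :=
  (Lp.aeMemSubmodule J).comap (Z : E →ₗ[ℂ] Lp H 2 m)

theorem mem_fiberSubmodule {J : Ω → Submodule ℂ H} {f : E} :
    f ∈ fiberSubmodule Z J ↔ ∀ᵐ ω ∂m, Z f ω ∈ J ω := Iff.rfl

theorem isClosed_fiberSubmodule {J : Ω → Submodule ℂ H} (hJ : ∀ ω, IsClosed (J ω : Set H)) :
    IsClosed (fiberSubmodule Z J : Set E) :=
  (Lp.isClosed_aeMemSubmodule hJ).preimage Z.continuous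

theorem apply_mem_fiberSubmodule (hZT : ∀ γ f, Z (T γ f) =ᵐ[m] fun ω => χ γ ω • Z f ω)
    {J : Ω → Submodule ℂ H} (γ : Γ) {f : E} (hf : f ∈ fiberSubmodule Z J) :
    T γ f ∈ fiberSubmodule Z J := by
  filter_upwards [hf, hZT γ f] with ω hω hTω
  exact hTω ▸ smul_mem _ _ hω

theorem orbitSpan_eq_of_invariant [Zero Γ] (hT0 : ∀ f, T 0 f = f) {V : Submodule ℂ E}
    (hV : IsClosed (V : Set E)) (hVinv : ∀ γ, ∀ f ∈ V, T γ f ∈ V) {A : Set E}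
    (hAV : A ⊆ V) (hVA : (V : Set E) ⊆ closure A) : V = orbitSpan T A := by
  refine le_antisymm (fun f hf => ?_) (topologicalClosure_minimal _ (span_le.2 ?_) hV)
  · refine closure_mono (fun φ hφ => ?_) (hVA hf)
    exact subset_span ⟨φ, hφ, 0, (hT0 φ).symm⟩
  · rintro _ ⟨φ, hφ, γ, rfl⟩
    exact hVinv γ φ (hAV hφ)

variable [AddCommGroup Γ]

theorem ae_inner_eq_zero_of_inner_orbit_eq_zero
    (hχdet : ∀ F : Ω → ℂ, Integrable F m → (∀ γ, ∫ ω, F ω * χ γ ω ∂m = 0) → F =ᵐ[m] 0)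
    (hχconj : ∀ γ ω, starRingEnd ℂ (χ γ ω) = χ (-γ) ω)
    (hZT : ∀ γ f, Z (T γ f) =ᵐ[m] fun ω => χ γ ω • Z f ω) {φ h : E}
    (horth : ∀ γ, inner ℂ (T γ φ) h = 0) :
    ∀ᵐ ω ∂m, inner ℂ (Z φ ω) (Z h ω) = 0 := by
  refine hχdet _ (L2.integrable_inner _ _) fun γ => ?_
  calc ∫ ω, inner ℂ (Z φ ω) (Z h ω) * χ γ ω ∂m
      = ∫ ω, inner ℂ (Z (T (-γ) φ) ω) (Z h ω) ∂m := integral_congr_ae <| by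
        filter_upwards [hZT (-γ) φ] with ω hω
        rw [hω, inner_smul_left, hχconj, neg_neg, mul_comm]
    _ = inner ℂ (T (-γ) φ) h := by rw [← L2.inner_def, LinearIsometryEquiv.inner_map_map]
    _ = 0 := horth (-γ)

theorem fiberSpan_eq_closure_span_range (A : Set E) (ω : Ω) :
    fiberSpan Z A ω = (span ℂ (range fun φ : A => Z φ ω)).topologicalClosure := by
  have : {v | ∃ φ ∈ A, v = Z φ ω} = range fun φ : A => Z φ ω := by
    ext
    simp [eq_comm]
  rw [fiberSpan, this]

theorem IsMeasurableRangeFunction.fiberSpan [CompleteSpace H] [SecondCountableTopology H]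
    {A : Set E} (hA : A.Countable) : IsMeasurableRangeFunction (fiberSpan Z A) := by
  have := hA.to_subtype
  simpa only [← fiberSpan_eq_closure_span_range] using
    IsMeasurableRangeFunction.closure_span (fun (φ : A) ω => Z φ ω)
      fun _ => Lp.stronglyMeasurable _

theorem eq_zero_of_inner_orbit_eq_zero_of_mem_fiberSubmodule
    (hχdet : ∀ F : Ω → ℂ, Integrable F m → (∀ γ, ∫ ω, F ω * χ γ ω ∂m = 0) → F =ᵐ[m] 0)
    (hχconj : ∀ γ ω, starRingEnd ℂ (χ γ ω) = χ (-γ) ω)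
    (hZT : ∀ γ f, Z (T γ f) =ᵐ[m] fun ω => χ γ ω • Z f ω) {A : Set E} (hA : A.Countable)
    {h : E} (horth : ∀ φ ∈ A, ∀ γ, inner ℂ (T γ φ) h = 0)
    (hh : h ∈ fiberSubmodule Z (fiberSpan Z A)) : h = 0 := by
  have hfiber : ∀ᵐ ω ∂m, ∀ φ ∈ A, inner ℂ (Z φ ω) (Z h ω) = 0 := (ae_ball_iff hA).2
    fun φ hφ => ae_inner_eq_zero_of_inner_orbit_eq_zero hχdet hχconj hZT (horth φ hφ)
  have : Z h = 0 := Lp.eq_zero_iff_ae_eq_zero.2 <| by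
    filter_upwards [hh, hfiber] with ω hhω hω
    refine eq_zero_of_mem_closure_span_of_inner_eq_zero hhω ?_
    rintro _ ⟨φ, hφ, rfl⟩
    exact hω φ hφ
  exact Z.map_eq_zero_iff.1 this

theorem orbitSpan_eq_fiberSubmodule [CompleteSpace E]
    (hχdet : ∀ F : Ω → ℂ, Integrable F m → (∀ γ, ∫ ω, F ω * χ γ ω ∂m = 0) → F =ᵐ[m] 0)
    (hχconj : ∀ γ ω, starRingEnd ℂ (χ γ ω) = χ (-γ) ω)
    (hZT : ∀ γ f, Z (T γ f) =ᵐ[m] fun ω => χ γ ω • Z f ω) {A : Set E} (hA : A.Countable) :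
    orbitSpan T A = fiberSubmodule Z (fiberSpan Z A) := by
  have hle : orbitSpan T A ≤ fiberSubmodule Z (fiberSpan Z A) := by
    refine topologicalClosure_minimal _ (span_le.2 ?_)
      (isClosed_fiberSubmodule fun _ => isClosed_topologicalClosure _)
    rintro _ ⟨φ, hφ, γ, rfl⟩
    refine apply_mem_fiberSubmodule hZT γ
      (mem_fiberSubmodule.2 <| .of_forall fun ω => le_topologicalClosure _ ?_)
    exact subset_span ⟨φ, hφ, rfl⟩
  refine le_antisymm hle fun f hf => ?_
  have : CompleteSpace (orbitSpan T A) := (isClosed_topologicalClosure _).completeSpace_coe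
  obtain ⟨g, hg, h, hh, rfl⟩ := (orbitSpan T A).exists_add_mem_mem_orthogonal f
  suffices h = 0 by rwa [this, add_zero]
  refine eq_zero_of_inner_orbit_eq_zero_of_mem_fiberSubmodule hχdet hχconj hZT hA
    (fun φ hφ γ => (mem_orthogonal _ _).1 hh _ (le_topologicalClosure _
      (subset_span ⟨φ, hφ, γ, rfl⟩))) ?_
  simpa using sub_mem hf (hle hg)

end Fiberization

theorem gamma_sigma_invariant_characterization_general
    {X : Type*} [MeasurableSpace X] (μ : Measure X)
    (C : Set X)
    {Γ : Type*} [AddCommGroup Γ]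
    {Γh : Type*} [MeasurableSpace Γh] (mh : Measure Γh) [IsProbabilityMeasure mh]
    (χ : Γ → Γh → ℂ)
    (hχadd : ∀ γ γ' α, χ (γ + γ') α = χ γ α * χ γ' α)
    (hχnorm : ∀ γ α, ‖χ γ α‖ = 1)
    (hχdet : ∀ f : Γh → ℂ, Integrable f mh →
      (∀ γ : Γ, ∫ α, f α * χ γ α ∂mh = 0) → f =ᵐ[mh] 0)
    [TopologicalSpace.SeparableSpace (Lp ℂ 2 μ)]  -- L²(X) is separable
    (Pi : Γ → (Lp ℂ 2 μ ≃ₗᵢ[ℂ] Lp ℂ 2 μ))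
    (hPiadd : ∀ γ γ' (f : Lp ℂ 2 μ), Pi γ (Pi γ' f) = Pi (γ + γ') f)
    (Z : Lp ℂ 2 μ ≃ₗᵢ[ℂ] Lp (Lp ℂ 2 (μ.restrict C)) 2 mh)
    (hZPi : ∀ (γ : Γ) (f : Lp ℂ 2 μ),
      ⇑(Z (Pi γ f)) =ᵐ[mh] fun α => χ γ α • (⇑(Z f) α))
    (V : Submodule ℂ (Lp ℂ 2 μ)) (hV : IsClosed (V : Set (Lp ℂ 2 μ))) :
    -- (1) ↔ (2)
    ((∀ γ : Γ, ∀ f ∈ V, Pi γ f ∈ V) ↔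
      ∃ J : Γh → Submodule ℂ (Lp ℂ 2 (μ.restrict C)), IsMeasurableRangeFunction J ∧
        ∀ f : Lp ℂ 2 μ, f ∈ V ↔ ∀ᵐ α ∂mh, (Z f) α ∈ J α) ∧
    -- the correspondence is one-to-one (identifying range functions equal a.e.)
    (∀ J₁ J₂ : Γh → Submodule ℂ (Lp ℂ 2 (μ.restrict C)),
      IsMeasurableRangeFunction J₁ → IsMeasurableRangeFunction J₂ →
      (∀ f : Lp ℂ 2 μ, (∀ᵐ α ∂mh, (Z f) α ∈ J₁ α) ↔ (∀ᵐ α ∂mh, (Z f) α ∈ J₂ α)) →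
      ∀ᵐ α ∂mh, J₁ α = J₂ α) ∧
    -- and onto: every measurable range function arises from a (Γ,σ)-invariant space
    (∀ J : Γh → Submodule ℂ (Lp ℂ 2 (μ.restrict C)), IsMeasurableRangeFunction J →
      ∃ W : Submodule ℂ (Lp ℂ 2 μ), IsClosed (W : Set (Lp ℂ 2 μ)) ∧
        (∀ γ : Γ, ∀ f ∈ W, Pi γ f ∈ W) ∧
        ∀ f : Lp ℂ 2 μ, f ∈ W ↔ ∀ᵐ α ∂mh, (Z f) α ∈ J α) ∧
    -- if V = S_σ^Γ(A), the range function is α ↦ closure span {Z[φ](α) : φ ∈ A}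
    (∀ A : Set (Lp ℂ 2 μ), A.Countable →
      V = (Submodule.span ℂ {g | ∃ φ ∈ A, ∃ γ : Γ, g = Pi γ φ}).topologicalClosure →
      ∃ J : Γh → Submodule ℂ (Lp ℂ 2 (μ.restrict C)), IsMeasurableRangeFunction J ∧
        (∀ f : Lp ℂ 2 μ, f ∈ V ↔ ∀ᵐ α ∂mh, (Z f) α ∈ J α) ∧
        ∀ᵐ α ∂mh, J α =
          (Submodule.span ℂ {v | ∃ φ ∈ A, v = (Z φ) α}).topologicalClosure) := by
  have : SecondCountableTopology (Lp ℂ 2 μ) := UniformSpace.secondCountable_of_separable _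
  have : SecondCountableTopology (Lp (Lp ℂ 2 (μ.restrict C)) 2 mh) :=
    Z.symm.isometry.isEmbedding.secondCountableTopology
  have : SecondCountableTopology (Lp ℂ 2 (μ.restrict C)) :=
    secondCountableTopology_of_Lp (m := mh) (p := 2)
  have hχconj γ α := conj_eq_apply_neg (hχadd · · α) (hχnorm · α) γ
  have hPi0 f : Pi 0 f = f := (Pi 0).injective (by rw [hPiadd, add_zero])
  have hgen {A : Set (Lp ℂ 2 μ)} (hA : A.Countable) :=
    orbitSpan_eq_fiberSubmodule hχdet hχconj hZPi hA
  refine ⟨⟨fun hinv => ?_, ?_⟩, fun J₁ J₂ h₁ h₂ hJ => ?_, fun J hJ => ?_, fun A hA hVA => ?_⟩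
  · obtain ⟨A, hAV, hA, hVA⟩ := (TopologicalSpace.IsSeparable.of_separableSpace
      (V : Set (Lp ℂ 2 μ))).exists_countable_dense_subset
    have hVJ : V = fiberSubmodule Z (fiberSpan Z A) :=
      (orbitSpan_eq_of_invariant hPi0 hV hinv hAV hVA).trans (hgen hA)
    exact ⟨fiberSpan Z A, .fiberSpan hA, fun f => hVJ ▸ mem_fiberSubmodule⟩
  · rintro ⟨J, -, hJ⟩ γ f hf
    exact (hJ _).2 (apply_mem_fiberSubmodule hZPi γ ((hJ f).1 hf))
  · filter_upwards [h₁.ae_le h₂.1 (Z.surjective.forall.2 fun f => (hJ f).1),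
      h₂.ae_le h₁.1 (Z.surjective.forall.2 fun f => (hJ f).2)] with α h₁₂ h₂₁
    exact le_antisymm h₁₂ h₂₁
  · exact ⟨fiberSubmodule Z J, isClosed_fiberSubmodule hJ.1,
      fun γ _ => apply_mem_fiberSubmodule hZPi γ, fun _ => Iff.rfl⟩
  · exact ⟨fiberSpan Z A, .fiberSpan hA, fun f => hVA.trans (hgen hA) ▸ mem_fiberSubmodule,
      .of_forall fun _ => rfl⟩

/-- Characterization of `(Γ,σ)`-invariant subspaces of `L²(X)` in terms of measurable
range functions and the generalized Zak transform, together with the bijectivity of the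
correspondence and the formula for the range function of a generated space. -/
theorem gamma_sigma_invariant_characterization
    {X : Type*} [MeasurableSpace X] (μ : Measure X) [SigmaFinite μ]
    (C : Set X) (hCmeas : MeasurableSet C)
    {Γ : Type*} [AddCommGroup Γ] [Countable Γ]
    {Γh : Type*} [MeasurableSpace Γh] (mh : Measure Γh) [IsProbabilityMeasure mh]
    (χ : Γ → Γh → ℂ)
    (hχmeas : ∀ γ, Measurable (χ γ))
    (hχadd : ∀ γ γ' α, χ (γ + γ') α = χ γ α * χ γ' α)
    (hχnorm : ∀ γ α, ‖χ γ α‖ = 1)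
    (hχdet : ∀ f : Γh → ℂ, Integrable f mh →
      (∀ γ : Γ, ∫ α, f α * χ γ α ∂mh = 0) → f =ᵐ[mh] 0)
    [TopologicalSpace.SeparableSpace (Lp ℂ 2 μ)]  -- L²(X) is separable
    (Pi : Γ → (Lp ℂ 2 μ ≃ₗᵢ[ℂ] Lp ℂ 2 μ))
    (hPiadd : ∀ γ γ' (f : Lp ℂ 2 μ), Pi γ (Pi γ' f) = Pi (γ + γ') f)
    (Z : Lp ℂ 2 μ ≃ₗᵢ[ℂ] Lp (Lp ℂ 2 (μ.restrict C)) 2 mh)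
    (hZPi : ∀ (γ : Γ) (f : Lp ℂ 2 μ),
      ⇑(Z (Pi γ f)) =ᵐ[mh] fun α => χ γ α • (⇑(Z f) α))
    (V : Submodule ℂ (Lp ℂ 2 μ)) (hV : IsClosed (V : Set (Lp ℂ 2 μ))) :
    -- (1) ↔ (2)
    ((∀ γ : Γ, ∀ f ∈ V, Pi γ f ∈ V) ↔
      ∃ J : Γh → Submodule ℂ (Lp ℂ 2 (μ.restrict C)), IsMeasurableRangeFunction J ∧
        ∀ f : Lp ℂ 2 μ, f ∈ V ↔ ∀ᵐ α ∂mh, (Z f) α ∈ J α) ∧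
    -- the correspondence is one-to-one (identifying range functions equal a.e.)
    (∀ J₁ J₂ : Γh → Submodule ℂ (Lp ℂ 2 (μ.restrict C)),
      IsMeasurableRangeFunction J₁ → IsMeasurableRangeFunction J₂ →
      (∀ f : Lp ℂ 2 μ, (∀ᵐ α ∂mh, (Z f) α ∈ J₁ α) ↔ (∀ᵐ α ∂mh, (Z f) α ∈ J₂ α)) →
      ∀ᵐ α ∂mh, J₁ α = J₂ α) ∧
    -- and onto: every measurable range function arises from a (Γ,σ)-invariant space
    (∀ J : Γh → Submodule ℂ (Lp ℂ 2 (μ.restrict C)), IsMeasurableRangeFunction J →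
      ∃ W : Submodule ℂ (Lp ℂ 2 μ), IsClosed (W : Set (Lp ℂ 2 μ)) ∧
        (∀ γ : Γ, ∀ f ∈ W, Pi γ f ∈ W) ∧
        ∀ f : Lp ℂ 2 μ, f ∈ W ↔ ∀ᵐ α ∂mh, (Z f) α ∈ J α) ∧
    -- if V = S_σ^Γ(A), the range function is α ↦ closure span {Z[φ](α) : φ ∈ A}
    (∀ A : Set (Lp ℂ 2 μ), A.Countable →
      V = (Submodule.span ℂ {g | ∃ φ ∈ A, ∃ γ : Γ, g = Pi γ φ}).topologicalClosure →
      ∃ J : Γh → Submodule ℂ (Lp ℂ 2 (μ.restrict C)), IsMeasurableRangeFunction J ∧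
        (∀ f : Lp ℂ 2 μ, f ∈ V ↔ ∀ᵐ α ∂mh, (Z f) α ∈ J α) ∧
        ∀ᵐ α ∂mh, J α =
          (Submodule.span ℂ {v | ∃ φ ∈ A, v = (Z φ) α}).topologicalClosure) :=
  gamma_sigma_invariant_characterization_general μ C mh χ hχadd hχnorm hχdet Pi hPiadd Z hZPi V hV
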